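/- arXiv:2208.09091 — 3 statements merged into one kernel-verified Lean document; each statement's English description precedes it below -/
import Mathlib

section
/- Let Φ₁,Φ₂:ℕ→(0,∞) be functions tending to infinity. Suppose (log Φ₂(n))/n converges as n→∞ to log B₂ with 1 ≤ B₂ < ∞, and liminf_{n→∞} (log Φ₁(n))/n > 2·log B₂ (the liminf possibly being +∞). Then F(Φ₁,Φ₂) = ∅. -/
open Filter MeasureTheory Set
open scoped ENNReal NNReal

noncomputable section

/-- The Gauss map `T(x) = 1/x - ⌊1/x⌋` on `[0,1)`, with `T 0 = 0`. -/
def gaussMap (x : ℝ) : ℝ := Int.fract (1 / x)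

/-- The `n`-th partial quotient `a_n(x) = ⌊1 / T^[n-1] x⌋` (for `n ≥ 1`). -/
def pq (x : ℝ) (n : ℕ) : ℤ := ⌊1 / gaussMap^[n - 1] x⌋

/-- The continuant `q_n(a_1, …, a_n)`, given by `q_{-1} = 0`, `q_0 = 1`,
`q_k = a_k q_{k-1} + q_{k-2}`. -/
def contQ : List ℕ → ℕ
  | [] => 1
  | [a] => a
  | a :: b :: l => a * contQ (b :: l) + contQ l

/-- `q_n(a_1,…,a_n)` for a tuple of positive integers. -/
def qTuple {n : ℕ} (f : Fin n → ℕ+) : ℕ := contQ (List.ofFn fun i => (f i : ℕ))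

/-- The condition `limsup_{n→∞} (1/n)·log S_n ≤ 0`, the logarithm taken in `[0,∞]`. -/
def PressureNonpos (S : ℕ → ℝ≥0∞) : Prop :=
  Filter.limsup (fun n : ℕ => (((n : ℝ)⁻¹ : ℝ) : EReal) * ENNReal.log (S n)) Filter.atTop ≤ 0

/-- `s₀(B)`. -/
def s0 (B : ℝ) : ℝ :=
  sInf {s : ℝ | 0 ≤ s ∧ PressureNonpos fun n =>
    ∑' f : Fin n → ℕ+, (ENNReal.ofReal (B ^ (s * n)) * (qTuple f : ℝ≥0∞) ^ 2) ^ (-s)}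

/-- `s_B`. -/
def sB (B : ℝ) : ℝ :=
  sInf {s : ℝ | 0 ≤ s ∧ PressureNonpos fun n =>
    ∑' f : Fin n → ℕ+, (ENNReal.ofReal (B ^ (n : ℝ)) * (qTuple f : ℝ≥0∞) ^ 2) ^ (-s)}

/-- `g_{B₁,B₂}`. -/
def gB (B₁ B₂ : ℝ) : ℝ :=
  sInf {s : ℝ | 0 ≤ s ∧ PressureNonpos fun n =>
    ∑' f : Fin n → ℕ+, ENNReal.ofReal (B₂ ^ ((1 - s) * n)) *
      (ENNReal.ofReal (B₁ ^ (n : ℝ)) * (qTuple f : ℝ≥0∞) ^ 2) ^ (-s)}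

/-- The set `F(Φ₁, Φ₂)`. -/
def FSet (Φ₁ Φ₂ : ℕ → ℝ) : Set ℝ :=
  {x | Irrational x ∧ x ∈ Set.Ioo (0 : ℝ) 1 ∧
    (∃ᶠ n in atTop, Φ₁ n ≤ ((pq x n * pq x (n + 1) : ℤ) : ℝ)) ∧
    (∀ᶠ n in atTop, ((pq x (n + 1) : ℤ) : ℝ) < Φ₂ n)}

/-
Along a point of `F(Φ₁, Φ₂)` the bound `a_{n+1} < Φ₂(n)` holds eventually, so eventually
`a_n a_{n+1} < Φ₂(n-1) Φ₂(n)`, whose logarithm grows like `2n log B₂`. Infinitely often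
`Φ₁(n) ≤ a_n a_{n+1}`, so `liminf (log Φ₁(n))/n ≤ 2 log B₂`, which the hypothesis excludes.
-/

lemma pq_nonneg (x : ℝ) {n : ℕ} (hn : 2 ≤ n) : 0 ≤ pq x n := by
  obtain ⟨k, rfl⟩ : ∃ k, n = k + 2 := ⟨n - 2, by omega⟩
  rw [pq, show k + 2 - 1 = k + 1 by omega, Function.iterate_succ_apply', gaussMap,
    Int.floor_nonneg]
  exact one_div_nonneg.mpr (Int.fract_nonneg _)

lemma eventually_mul_succ_lt {a b : ℕ → ℝ} (ha : ∀ᶠ n in atTop, 0 ≤ a n)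
    (h : ∀ᶠ n in atTop, a (n + 1) < b n) :
    ∀ᶠ n in atTop, a n * a (n + 1) < b (n - 1) * b n := by
  have hpred : ∀ᶠ n in atTop, a n < b (n - 1) := by
    filter_upwards [(tendsto_sub_atTop_nat 1).eventually h, eventually_ge_atTop 1] with n hn hn1
    rwa [Nat.sub_add_cancel hn1] at hn
  filter_upwards [ha, (tendsto_add_atTop_nat 1).eventually ha, hpred, h] with n h₀ h₁ hlt hlt'
  exact mul_lt_mul'' hlt hlt' h₀ h₁

lemma tendsto_pred_div_of_tendsto_div {u : ℕ → ℝ} {L : ℝ}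
    (h : Tendsto (fun n : ℕ => u n / n) atTop (nhds L)) :
    Tendsto (fun n : ℕ => u (n - 1) / n) atTop (nhds L) := by
  have hsucc : Tendsto (fun n : ℕ => u n / (n + 1)) atTop (nhds L) := by
    have := h.mul (tendsto_natCast_div_add_atTop (1 : ℝ))
    rw [mul_one] at this
    refine this.congr' ?_
    filter_upwards [eventually_ne_atTop 0] with n hn
    field_simp
  refine (hsucc.comp (tendsto_sub_atTop_nat 1)).congr' ?_
  filter_upwards [eventually_ge_atTop 1] with n hn
  simp [Nat.cast_sub hn]

lemma not_frequently_le_of_lt_liminf {α : Type*} {l : Filter α} {f g : α → ℝ} {c : ℝ}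
    (hg : Tendsto g l (nhds c)) (hf : (c : EReal) < liminf (fun a => (f a : EReal)) l) :
    ¬ ∃ᶠ a in l, f a ≤ g a := by
  obtain ⟨d, hcd, hdf⟩ := EReal.exists_between_coe_real hf
  have hgd : ∀ᶠ a in l, g a < d := hg.eventually_lt_const (EReal.coe_lt_coe_iff.mp hcd)
  have hdf' : ∀ᶠ a in l, d < f a := by
    filter_upwards [eventually_lt_of_lt_liminf hdf] with a ha
    exact_mod_cast ha
  rw [not_frequently]
  filter_upwards [hgd, hdf'] with a h₁ h₂
  linarith

theorem statement2_general (Φ₁ Φ₂ : ℕ → ℝ) (hpos₁ : ∀ n, 0 < Φ₁ n) (hpos₂ : ∀ n, 0 < Φ₂ n)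
    (B₂ : ℝ)
    (hlim : Tendsto (fun n : ℕ => Real.log (Φ₂ n) / n) atTop (nhds (Real.log B₂)))
    (hliminf : ((2 * Real.log B₂ : ℝ) : EReal) <
      liminf (fun n : ℕ => ((Real.log (Φ₁ n) / n : ℝ) : EReal)) atTop) :
    FSet Φ₁ Φ₂ = ∅ := by
  rw [Set.eq_empty_iff_forall_notMem]
  rintro x ⟨-, -, hfreq, hev⟩
  have hprod : ∀ᶠ n in atTop, ((pq x n * pq x (n + 1) : ℤ) : ℝ) < Φ₂ (n - 1) * Φ₂ n := by
    have hnonneg : ∀ᶠ n in atTop, (0 : ℝ) ≤ pq x n := by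
      filter_upwards [eventually_ge_atTop 2] with n hn
      exact_mod_cast pq_nonneg x hn
    push_cast
    exact eventually_mul_succ_lt hnonneg hev
  have hlog : ∃ᶠ n in atTop,
      Real.log (Φ₁ n) / n ≤ Real.log (Φ₂ (n - 1)) / n + Real.log (Φ₂ n) / n := by
    refine (hfreq.and_eventually hprod).mono fun n ⟨hle, hlt⟩ => ?_
    rw [← add_div, ← Real.log_mul (hpos₂ _).ne' (hpos₂ _).ne']
    gcongr
    exacts [hpos₁ n, hle.trans hlt.le]
  have hsum := (tendsto_pred_div_of_tendsto_div hlim).add hlim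
  rw [← two_mul] at hsum
  exact not_frequently_le_of_lt_liminf hsum hliminf hlog

theorem statement2 (Φ₁ Φ₂ : ℕ → ℝ) (hpos₁ : ∀ n, 0 < Φ₁ n) (hpos₂ : ∀ n, 0 < Φ₂ n)
    (htend₁ : Tendsto Φ₁ atTop atTop) (htend₂ : Tendsto Φ₂ atTop atTop)
    (B₂ : ℝ) (hB₂ : 1 ≤ B₂)
    (hlim : Tendsto (fun n : ℕ => Real.log (Φ₂ n) / n) atTop (nhds (Real.log B₂)))
    (hliminf : ((2 * Real.log B₂ : ℝ) : EReal) <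
      liminf (fun n : ℕ => ((Real.log (Φ₁ n) / n : ℝ) : EReal)) atTop) :
    FSet Φ₁ Φ₂ = ∅ :=
  statement2_general Φ₁ Φ₂ hpos₁ hpos₂ B₂ hlim hliminf

end
end

section
/- Let Φ₁,Φ₂:ℕ→(0,∞) be functions tending to infinity. Suppose liminf_{n→∞} (log Φ₁(n))/n = +∞ and (log Φ₂(n))/n → +∞, that (log log Φ₂(n))/n converges as n→∞ to log b₂ with 1 ≤ b₂ < ∞, and that liminf_{n→∞} (log log Φ₁(n))/n > log b₂ (the liminf possibly being +∞). Then F(Φ₁,Φ₂) = ∅. -/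
open Filter MeasureTheory Set
open scoped ENNReal NNReal

noncomputable section

/-!
Partial quotients of an irrational number are at least `1`, so whenever
`Φ₁ n ≤ a_n a_{n+1}` with `a_{n+1} < Φ₂ n` and `a_n < Φ₂ (n - 1)`, we get
`log log Φ₁ n ≤ log 2 + max (log log Φ₂ (n - 1)) (log log Φ₂ n)`.
Divided by `n`, the right-hand side tends to `log b₂`; as this happens for infinitely many `n`,
the liminf of `log log Φ₁ n / n` is at most `log b₂`.
-/

theorem Irrational.gaussMap {x : ℝ} (hx : Irrational x) : Irrational (_root_.gaussMap x) := by
  rw [_root_.gaussMap, Int.fract, one_div]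
  exact hx.inv.sub_intCast _

theorem Irrational.gaussMap_iterate {x : ℝ} (hx : Irrational x) (k : ℕ) :
    Irrational (_root_.gaussMap^[k] x) := by
  induction k with
  | zero => exact hx
  | succ k ih => simpa only [Function.iterate_succ_apply'] using ih.gaussMap

theorem gaussMap_iterate_mem_Ioo {x : ℝ} (hx : Irrational x) (hx01 : x ∈ Ioo 0 1) (k : ℕ) :
    gaussMap^[k] x ∈ Ioo 0 1 := by
  cases k with
  | zero => exact hx01
  | succ k =>
    rw [Function.iterate_succ_apply']
    exact ⟨(Int.fract_nonneg _).lt_of_ne (hx.gaussMap_iterate k).gaussMap.ne_zero.symm,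
      Int.fract_lt_one _⟩

theorem one_le_pq {x : ℝ} (hx : Irrational x) (hx01 : x ∈ Ioo 0 1) (n : ℕ) :
    (1 : ℝ) ≤ pq x n := by
  obtain ⟨hpos, hlt⟩ := gaussMap_iterate_mem_Ioo hx hx01 (n - 1)
  exact_mod_cast Int.le_floor.mpr (by simpa using (one_le_div hpos).mpr hlt.le)

theorem Real.log_log_le_of_le_mul {y a b : ℝ} (hy : 1 < y) (ha : 1 < a) (hb : 1 < b)
    (hyab : y ≤ a * b) :
    Real.log (Real.log y) ≤ Real.log 2 + max (Real.log (Real.log a)) (Real.log (Real.log b)) := by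
  have hla := Real.log_pos ha
  have hlb := Real.log_pos hb
  have hsum : Real.log y ≤ 2 * max (Real.log a) (Real.log b) := by
    calc Real.log y ≤ Real.log (a * b) := Real.log_le_log (by linarith) hyab
      _ = Real.log a + Real.log b := Real.log_mul (by positivity) (by positivity)
      _ ≤ 2 * max (Real.log a) (Real.log b) := by
        linarith [le_max_left (Real.log a) (Real.log b), le_max_right (Real.log a) (Real.log b)]
  calc Real.log (Real.log y) ≤ Real.log (2 * max (Real.log a) (Real.log b)) :=
        Real.log_le_log (Real.log_pos hy) hsum
    _ = Real.log 2 + Real.log (max (Real.log a) (Real.log b)) :=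
        Real.log_mul two_ne_zero (lt_max_of_lt_left hla).ne'
    _ = Real.log 2 + max (Real.log (Real.log a)) (Real.log (Real.log b)) := by
        rw [(Real.strictMonoOn_log.monotoneOn).map_max hla hlb]

theorem Filter.Tendsto.pred_div_natCast {u : ℕ → ℝ} {L : ℝ}
    (h : Tendsto (fun n => u n / n) atTop (nhds L)) :
    Tendsto (fun n => u (n - 1) / n) atTop (nhds L) := by
  rw [← tendsto_add_atTop_iff_nat 1]
  have hmul := h.mul (tendsto_natCast_div_add_atTop (1 : ℝ))
  rw [mul_one] at hmul
  refine hmul.congr' ((eventually_ge_atTop 1).mono fun n hn => ?_)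
  have : (n : ℝ) ≠ 0 := by positivity
  simp only [Nat.add_sub_cancel, Nat.cast_add, Nat.cast_one]
  field_simp

theorem EReal.liminf_coe_le_of_frequently_le {ι : Type*} {l : Filter ι} {f g : ι → ℝ} {L : ℝ}
    (hfg : ∃ᶠ i in l, f i ≤ g i) (hg : Tendsto g l (nhds L)) :
    liminf (fun i => (f i : EReal)) l ≤ L := by
  by_contra! hlt
  obtain ⟨c, hLc, hc⟩ := EReal.exists_between_coe_real hlt
  have hfc : ∀ᶠ i in l, c < f i :=
    (eventually_lt_of_lt_liminf hc).mono fun i hi => by exact_mod_cast hi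
  have hgc : ∀ᶠ i in l, g i < c := hg.eventually_lt_const (by exact_mod_cast hLc)
  obtain ⟨i, hi, hfi, hgi⟩ := (hfg.and_eventually (hfc.and hgc)).exists
  linarith

theorem statement4_general (Φ₁ Φ₂ : ℕ → ℝ)
    (htend₁ : Tendsto Φ₁ atTop atTop)
    (b₂ : ℝ)
    (hlim : Tendsto (fun n : ℕ => Real.log (Real.log (Φ₂ n)) / n) atTop (nhds (Real.log b₂)))
    (hliminf : ((Real.log b₂ : ℝ) : EReal) <
      liminf (fun n : ℕ => ((Real.log (Real.log (Φ₁ n)) / n : ℝ) : EReal)) atTop) :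
    FSet Φ₁ Φ₂ = ∅ := by
  refine eq_empty_iff_forall_notMem.mpr fun x ⟨hx, hx01, hfreq, hnext⟩ => hliminf.not_ge ?_
  have hcur : ∀ᶠ n in atTop, (pq x n : ℝ) < Φ₂ (n - 1) := by
    filter_upwards [(tendsto_sub_atTop_nat 1).eventually hnext, eventually_ge_atTop 1] with n hn hn1
    rwa [Nat.sub_add_cancel hn1] at hn
  have hbound : ∃ᶠ n in atTop, Real.log (Real.log (Φ₁ n)) / n ≤
      (Real.log 2 + max (Real.log (Real.log (Φ₂ (n - 1)))) (Real.log (Real.log (Φ₂ n)))) / n := by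
    refine (hfreq.and_eventually ((htend₁.eventually_gt_atTop 1).and (hcur.and hnext))).mono ?_
    rintro n ⟨hprod, hΦ₁, hcur, hnext⟩
    have ha := one_le_pq hx hx01 n
    have hb := one_le_pq hx hx01 (n + 1)
    refine div_le_div_of_nonneg_right (Real.log_log_le_of_le_mul hΦ₁ (by linarith) (by linarith)
      (hprod.trans ?_)) n.cast_nonneg
    push_cast
    exact mul_le_mul hcur.le hnext.le (by linarith) (by linarith)
  have hbound_lim : Tendsto (fun n : ℕ => (Real.log 2 + max (Real.log (Real.log (Φ₂ (n - 1))))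
      (Real.log (Real.log (Φ₂ n)))) / n) atTop (nhds (Real.log b₂)) := by
    have h := (tendsto_const_div_atTop_nhds_zero_nat (Real.log 2)).add
      (hlim.pred_div_natCast.max hlim)
    rw [zero_add, max_self] at h
    refine h.congr fun n => ?_
    rw [add_div, max_div_div_right n.cast_nonneg]
  exact EReal.liminf_coe_le_of_frequently_le hbound hbound_lim

theorem statement4 (Φ₁ Φ₂ : ℕ → ℝ) (hpos₁ : ∀ n, 0 < Φ₁ n) (hpos₂ : ∀ n, 0 < Φ₂ n)
    (htend₁ : Tendsto Φ₁ atTop atTop) (htend₂ : Tendsto Φ₂ atTop atTop)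
    (hB₁ : liminf (fun n : ℕ => ((Real.log (Φ₁ n) / n : ℝ) : EReal)) atTop = ⊤)
    (hB₂ : Tendsto (fun n : ℕ => Real.log (Φ₂ n) / n) atTop atTop)
    (b₂ : ℝ) (hb₂ : 1 ≤ b₂)
    (hlim : Tendsto (fun n : ℕ => Real.log (Real.log (Φ₂ n)) / n) atTop (nhds (Real.log b₂)))
    (hliminf : ((Real.log b₂ : ℝ) : EReal) <
      liminf (fun n : ℕ => ((Real.log (Real.log (Φ₁ n)) / n : ℝ) : EReal)) atTop) :
    FSet Φ₁ Φ₂ = ∅ :=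
  statement4_general Φ₁ Φ₂ htend₁ b₂ hlim hliminf

end
end

section
/- The function (B₁,B₂) ↦ g_{B₁,B₂} is continuous on (1,∞)×(1,∞). -/
/-!
With `u = log B₁ + log B₂` and `v = log B₂`, the pressure of the sums defining `g_{B₁,B₂}` splits
as `(1 - s) log B₂ - s log B₁ + P(s)`, where `P(s)` is the pressure of `∑ q_n(a)^(-2s)`. Hence
`g_{B₁,B₂}` is the first `s ≥ 0` at which the antitone function `P` lies below the line
`s ↦ s u - v`. `P` is finite at `s = 1` because `q_n(a) ≥ a₁ ⋯ aₙ` and `∑ a⁻² < ∞`, and the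
line has positive slope and moves continuously with `(u, v)`, so the crossing point does too.
-/
open Filter MeasureTheory Set
open scoped ENNReal NNReal

noncomputable section

open Topology

section Threshold

variable {Z : ℝ → EReal}

def belowLine (Z : ℝ → EReal) (u v : ℝ) : Set ℝ :=
  {s | 0 ≤ s ∧ Z s ≤ ((s * u - v : ℝ) : EReal)}

def threshold (Z : ℝ → EReal) (u v : ℝ) : ℝ := sInf (belowLine Z u v)

lemma bddBelow_belowLine (u v : ℝ) : BddBelow (belowLine Z u v) := ⟨0, fun _ hs => hs.1⟩

lemma threshold_nonneg (u v : ℝ) : 0 ≤ threshold Z u v := Real.sInf_nonneg fun _ hs => hs.1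

lemma nonempty_belowLine (hZ : Antitone Z) {s₁ : ℝ} (hfin : Z s₁ < ⊤) {u : ℝ} (hu : 0 < u)
    (v : ℝ) : (belowLine Z u v).Nonempty := by
  obtain ⟨C, hC, -⟩ := EReal.lt_iff_exists_real_btwn.1 hfin
  have hline : Tendsto (fun s : ℝ => s * u - v) atTop atTop :=
    tendsto_atTop_add_const_right _ _ (tendsto_id.atTop_mul_const hu)
  obtain ⟨s, hs₁, hs₀, hsC⟩ := ((eventually_ge_atTop s₁).and
    ((eventually_ge_atTop 0).and (hline.eventually_ge_atTop C))).exists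
  exact ⟨s, hs₀, (hZ hs₁).trans (hC.le.trans (EReal.coe_le_coe_iff.2 hsC))⟩

variable (hZ : Antitone Z) {s₁ : ℝ} (hfin : Z s₁ < ⊤) {p : ℝ × ℝ} (hu : 0 < p.1)
include hZ hfin hu

lemma eventually_threshold_le {t : ℝ} (ht : threshold Z p.1 p.2 < t) :
    ∀ᶠ q in 𝓝 p, threshold Z q.1 q.2 ≤ t := by
  obtain ⟨s, ⟨hs₀, hsZ⟩, hst⟩ := exists_lt_of_csInf_lt (nonempty_belowLine hZ hfin hu p.2) ht
  have hlt : s * p.1 - p.2 < t * p.1 - p.2 := by nlinarith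
  have hline : Continuous fun q : ℝ × ℝ => t * q.1 - q.2 := by fun_prop
  filter_upwards [hline.continuousAt.eventually_const_lt hlt] with q hq
  exact csInf_le (bddBelow_belowLine _ _)
    ⟨hs₀.trans hst.le, (hZ hst.le).trans (hsZ.trans (EReal.coe_le_coe_iff.2 hq.le))⟩

lemma eventually_le_threshold {t : ℝ} (ht : t < threshold Z p.1 p.2) :
    ∀ᶠ q in 𝓝 p, t ≤ threshold Z q.1 q.2 := by
  rcases lt_or_ge t 0 with ht₀ | ht₀
  · exact Eventually.of_forall fun q => ht₀.le.trans (threshold_nonneg _ _)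
  obtain ⟨r, htr, hrg⟩ := exists_between ht
  have hr : ((r * p.1 - p.2 : ℝ) : EReal) < Z r := by
    by_contra! h
    exact notMem_of_lt_csInf hrg (bddBelow_belowLine _ _) ⟨ht₀.trans htr.le, h⟩
  have hlt : t * p.1 - p.2 < r * p.1 - p.2 := by nlinarith
  have hline : Continuous fun q : ℝ × ℝ => t * q.1 - q.2 := by fun_prop
  filter_upwards [continuous_fst.continuousAt.eventually_const_lt hu,
    hline.continuousAt.eventually_lt_const hlt] with q hq₁ hq
  refine le_csInf (nonempty_belowLine hZ hfin hq₁ q.2) fun s ⟨_, hsZ⟩ => ?_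
  by_contra! hst
  have : ((s * q.1 - q.2 : ℝ) : EReal) ≤ ((r * p.1 - p.2 : ℝ) : EReal) :=
    EReal.coe_le_coe_iff.2 (by nlinarith)
  exact not_lt_of_ge ((hZ (hst.trans htr).le).trans (hsZ.trans this)) hr

lemma continuousAt_threshold : ContinuousAt (fun q : ℝ × ℝ => threshold Z q.1 q.2) p :=
  tendsto_order.2
    ⟨fun a ha => by
      obtain ⟨t, hat, htg⟩ := exists_between ha
      exact (eventually_le_threshold hZ hfin hu htg).mono fun _ hq => hat.trans_le hq,
    fun b hb => by
      obtain ⟨t, hgt, htb⟩ := exists_between hb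
      exact (eventually_threshold_le hZ hfin hu hgt).mono fun _ hq => hq.trans_lt htb⟩

end Threshold

section Pressure

def pressure (S : ℕ → ℝ≥0∞) : EReal :=
  limsup (fun n : ℕ => (((n : ℝ)⁻¹ : ℝ) : EReal) * ENNReal.log (S n)) atTop

lemma pressure_mono {S T : ℕ → ℝ≥0∞} (h : ∀ n, S n ≤ T n) : pressure S ≤ pressure T :=
  limsup_le_limsup (Eventually.of_forall fun n =>
    mul_le_mul_of_nonneg_left (ENNReal.log_monotone (h n)) (EReal.coe_nonneg.2 (by positivity)))

lemma pressure_one : pressure (fun _ => 1) = 0 := by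
  simp [pressure]

lemma pressure_pow_mul {r : ℝ≥0∞} (hr₀ : r ≠ 0) (hr : r ≠ ⊤) (S : ℕ → ℝ≥0∞) :
    pressure (fun n => r ^ n * S n) = ENNReal.log r + pressure S := by
  obtain ⟨c, hc⟩ : ∃ c : ℝ, ENNReal.log r = c :=
    ⟨(ENNReal.log r).toReal, (EReal.coe_toReal (by simpa) (by simpa)).symm⟩
  have hterm : ∀ᶠ n : ℕ in atTop, (((n : ℝ)⁻¹ : ℝ) : EReal) * ENNReal.log (r ^ n * S n)
      = c + (((n : ℝ)⁻¹ : ℝ) : EReal) * ENNReal.log (S n) := by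
    filter_upwards [eventually_ge_atTop 1] with n hn
    rw [ENNReal.log_mul_add, ENNReal.log_pow, hc,
      EReal.left_distrib_of_nonneg_of_ne_top (EReal.coe_nonneg.2 (by positivity)) (by simp),
      ← mul_assoc, ← EReal.coe_natCast, ← EReal.coe_mul, ← EReal.coe_mul,
      inv_mul_cancel₀ (by positivity), one_mul]
  have hcont : ∀ x : EReal, ContinuousAt (fun y : EReal => (c : EReal) + y) x := fun x =>
    (EReal.continuousAt_add (Or.inl (EReal.coe_ne_top c)) (Or.inl (EReal.coe_ne_bot c))).comp
      (continuousAt_const.prodMk continuousAt_id)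
  rw [pressure, limsup_congr hterm, hc]
  exact ((Monotone.map_limsup_of_continuousAt (f := fun y : EReal => (c : EReal) + y)
    (fun _ _ h => add_le_add_right h _) _ (hcont _)).symm)

end Pressure

section Continuant

lemma prod_le_contQ : ∀ l : List ℕ, (∀ a ∈ l, 1 ≤ a) → l.prod ≤ contQ l
  | [], _ => le_rfl
  | [_], _ => by simp [contQ]
  | a :: b :: l, h => by
    rw [List.prod_cons, contQ]
    exact (Nat.mul_le_mul_left a
      (prod_le_contQ (b :: l) fun x hx => h x (List.mem_cons_of_mem _ hx))).trans
      (Nat.le_add_right _ _)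

lemma prod_le_qTuple {n : ℕ} (f : Fin n → ℕ+) : ∏ i, (f i : ℕ) ≤ qTuple f := by
  rw [← List.prod_ofFn]
  refine prod_le_contQ _ fun a ha => ?_
  obtain ⟨i, rfl⟩ := List.mem_ofFn.1 ha
  exact (f i).pos

lemma one_le_qTuple {n : ℕ} (f : Fin n → ℕ+) : 1 ≤ qTuple f :=
  (Finset.one_le_prod' (f := fun i => (f i : ℕ)) fun i _ => (f i).pos).trans (prod_le_qTuple f)

lemma ENNReal.tsum_pi_prod_eq_pow {α : Type*} (g : α → ℝ≥0∞) :
    ∀ n : ℕ, ∑' f : Fin n → α, ∏ i, g (f i) = (∑' a, g a) ^ n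
  | 0 => by simp
  | n + 1 => by
    rw [← (Fin.consEquiv fun _ : Fin (n + 1) => α).tsum_eq, ENNReal.tsum_prod', pow_succ',
      ← ENNReal.tsum_pi_prod_eq_pow g n, ← ENNReal.tsum_mul_right]
    refine tsum_congr fun a => ?_
    rw [← ENNReal.tsum_mul_left]
    exact tsum_congr fun f => by simp [Fin.prod_univ_succ]

lemma tsum_inv_sq_pnat_ne_top : ∑' a : ℕ+, ((a : ℝ≥0∞) ^ 2)⁻¹ ≠ ⊤ := by
  have h : Summable fun a : ℕ+ => (((a : ℕ) : ℝ≥0) ^ 2)⁻¹ := by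
    rw [← NNReal.summable_coe]
    have := (Real.summable_nat_pow_inv.2 one_lt_two).comp_injective PNat.coe_injective
    simpa [Function.comp_def] using this
  convert ENNReal.tsum_coe_ne_top_iff_summable.2 h using 1
  exact tsum_congr fun a => by rw [ENNReal.coe_inv (by positivity)]; push_cast; rfl

def continuantPressure (s : ℝ) : EReal :=
  pressure fun n => ∑' f : Fin n → ℕ+, ((qTuple f : ℝ≥0∞) ^ 2) ^ (-s)

lemma antitone_continuantPressure : Antitone continuantPressure := fun s t hst =>
  pressure_mono fun n => ENNReal.tsum_le_tsum fun f =>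
    ENNReal.rpow_le_rpow_of_exponent_le (one_le_pow₀ (by exact_mod_cast one_le_qTuple f))
      (neg_le_neg hst)

lemma continuantPressure_one_lt_top : continuantPressure 1 < ⊤ := by
  set K := ∑' a : ℕ+, ((a : ℝ≥0∞) ^ 2)⁻¹
  have hK₀ : K ≠ 0 := (lt_of_lt_of_le (by simp) (ENNReal.le_tsum 1)).ne'
  have hsum : ∀ n, ∑' f : Fin n → ℕ+, ((qTuple f : ℝ≥0∞) ^ 2) ^ (-1 : ℝ) ≤ K ^ n * 1 := by
    intro n
    rw [mul_one, ← ENNReal.tsum_pi_prod_eq_pow]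
    refine ENNReal.tsum_le_tsum fun f => ?_
    rw [ENNReal.rpow_neg_one, ← ENNReal.prod_inv_distrib fun _ _ _ _ _ => Or.inl (by simp),
      Finset.prod_pow]
    exact ENNReal.inv_le_inv.2 (pow_le_pow_left₀ zero_le (by exact_mod_cast prod_le_qTuple f) 2)
  calc continuantPressure 1 ≤ pressure fun n => K ^ n * 1 := pressure_mono hsum
    _ = ENNReal.log K := by
      rw [pressure_pow_mul hK₀ tsum_inv_sq_pnat_ne_top, pressure_one, add_zero]
    _ < ⊤ := ENNReal.log_lt_top_iff.2 tsum_inv_sq_pnat_ne_top.lt_top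

end Continuant

lemma gB_summand_eq {B₁ B₂ : ℝ} (hB₁ : 0 < B₁) (hB₂ : 0 < B₂) (s : ℝ) (n : ℕ) (q : ℝ≥0∞)
    (hq : q ≠ ⊤) :
    ENNReal.ofReal (B₂ ^ ((1 - s) * n)) * (ENNReal.ofReal (B₁ ^ (n : ℝ)) * q) ^ (-s)
      = ENNReal.ofReal (B₂ ^ (1 - s) * B₁ ^ (-s)) ^ n * q ^ (-s) := by
  rw [ENNReal.mul_rpow_of_ne_top ENNReal.ofReal_ne_top hq,
    ENNReal.ofReal_rpow_of_pos (by positivity), ← mul_assoc, ← ENNReal.ofReal_mul (by positivity),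
    ← ENNReal.ofReal_pow (by positivity), Real.rpow_mul hB₂.le, ← Real.rpow_mul hB₁.le,
    mul_comm (n : ℝ), Real.rpow_mul hB₁.le, Real.rpow_natCast, Real.rpow_natCast, mul_pow]

lemma gB_eq_threshold {B₁ B₂ : ℝ} (hB₁ : 0 < B₁) (hB₂ : 0 < B₂) :
    gB B₁ B₂ = threshold continuantPressure (Real.log B₁ + Real.log B₂) (Real.log B₂) := by
  refine congrArg sInf (Set.ext fun s => and_congr_right fun _ => ?_)
  have hpressure : pressure (fun n => ∑' f : Fin n → ℕ+, ENNReal.ofReal (B₂ ^ ((1 - s) * n)) *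
      (ENNReal.ofReal (B₁ ^ (n : ℝ)) * (qTuple f : ℝ≥0∞) ^ 2) ^ (-s))
      = (((1 - s) * Real.log B₂ - s * Real.log B₁ : ℝ) : EReal) + continuantPressure s := by
    simp_rw [gB_summand_eq hB₁ hB₂ s _ _ (ENNReal.pow_ne_top (ENNReal.natCast_ne_top _)),
      ENNReal.tsum_mul_left]
    rw [continuantPressure, pressure_pow_mul (by simp; positivity) ENNReal.ofReal_ne_top,
      ENNReal.log_ofReal_of_pos (by positivity), Real.log_mul (by positivity) (by positivity),
      Real.log_rpow hB₂, Real.log_rpow hB₁]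
    norm_cast
    ring_nf
  change pressure _ ≤ 0 ↔ _
  rw [hpressure, add_comm, ← EReal.le_sub_iff_add_le (.inl (EReal.coe_ne_bot _))
    (.inl (EReal.coe_ne_top _)), zero_sub, ← EReal.coe_neg,
    show -((1 - s) * Real.log B₂ - s * Real.log B₁) = s * (Real.log B₁ + Real.log B₂) - Real.log B₂
      by ring]

theorem statement18 :
    ContinuousOn (fun p : ℝ × ℝ => gB p.1 p.2) (Set.Ioi (1 : ℝ) ×ˢ Set.Ioi (1 : ℝ)) := by
  have hlog : ContinuousOn (fun p : ℝ × ℝ => (Real.log p.1 + Real.log p.2, Real.log p.2))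
      (Set.Ioi 1 ×ˢ Set.Ioi 1) := by
    fun_prop (disch := rintro p ⟨h₁, h₂⟩; grind)
  have hthreshold : ContinuousOn (fun p : ℝ × ℝ => threshold continuantPressure p.1 p.2)
      {p | 0 < p.1} := fun p hp =>
    (continuousAt_threshold antitone_continuantPressure continuantPressure_one_lt_top
      hp).continuousWithinAt
  refine (hthreshold.comp hlog fun p hp => ?_).congr fun p hp => ?_
  · exact add_pos (Real.log_pos hp.1) (Real.log_pos hp.2)
  · exact gB_eq_threshold (one_pos.trans hp.1) (one_pos.trans hp.2)

end
end
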